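/- arXiv:1808.01022 — 5 statements merged into one kernel-verified Lean document; each statement's English description precedes it below -/
import Mathlib

section
/- Let G = (V, E) be a simple graph with n vertices V = {1, ..., n} and let m ≥ 2. If a matrix X ∈ ℝ^{n×n} is symmetric positive semidefinite, has rank at most m − 1, has every entry in the two-element set {1, −1/(m−1)}, has x_{ii} = 1 for every vertex i ∈ V, and has x_{ij} = −1/(m−1) for every edge {i, j} ∈ E, then there exists a proper m-coloring c : V → {1, ..., m} of G such that for all i, j ∈ V one has x_{ij} = 1 when c(i) = c(j) and x_{ij} = −1/(m−1) when c(i) ≠ c(j). -/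
/-!
For a positive semidefinite `X` with unit diagonal, `X i j = 1` forces `e i - e j` into the
kernel of `X`, so rows `i` and `j` agree and `X i j = 1` is an equivalence relation. Its classes
are pairwise at value `c = -1/(m-1)`, and the all-ones vector on `k` representatives gives
`0 ≤ k (1 + (k - 1) c)`, which fails for `k > m`. Colouring each vertex by its class is proper,
since edges carry the value `c ≠ 1`.
-/

open Matrix

theorem Setoid.exists_fin_eq_iff_rel {α : Type*} (s : Setoid α) [Fintype (Quotient s)] {m : ℕ}
    (h : Fintype.card (Quotient s) ≤ m) : ∃ c : α → Fin m, ∀ i j, c i = c j ↔ s i j := by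
  obtain ⟨e⟩ := Function.Embedding.nonempty_of_card_le (h.trans_eq (Fintype.card_fin m).symm)
  exact ⟨fun i => e ⟦i⟧, fun i j => e.injective.eq_iff.trans Quotient.eq⟩

namespace Matrix.PosSemidef

variable {n : Type*} {X : Matrix n n ℝ}

theorem row_eq_row_of_add_diag_eq [Fintype n] [DecidableEq n] (hX : X.PosSemidef) {i j : n}
    (h : X i i + X j j = 2 * X i j) (k : n) : X i k = X j k := by
  set v : n → ℝ := Pi.single i 1 - Pi.single j 1
  have hsymm : ∀ a b, X b a = X a b := fun a b => by simpa using hX.isHermitian.apply a b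
  have hXv : X *ᵥ v = fun k => X k i - X k j := by
    ext k; simp [v, mulVec_sub]
  have hquad : star v ⬝ᵥ X *ᵥ v = 0 := by
    rw [hXv]
    simp only [star_trivial, v, sub_dotProduct, single_one_dotProduct, hsymm i j]
    linarith
  have hcol := congrFun ((hX.dotProduct_mulVec_zero_iff v).mp hquad) k
  simp only [hXv, Pi.zero_apply, sub_eq_zero] at hcol
  rw [← hsymm, hcol, hsymm]

def eqOneSetoid [Fintype n] [DecidableEq n] (hX : X.PosSemidef) (hdiag : ∀ i, X i i = 1) :
    Setoid n where
  r i j := X i j = 1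
  iseqv :=
    { refl := hdiag
      symm := fun {i j} h => by simpa [h] using hX.isHermitian.apply i j
      trans := fun {i j k} hij hjk =>
        (hX.row_eq_row_of_add_diag_eq (i := i) (j := j) (by rw [hdiag, hdiag, hij]; norm_num)
          k).trans hjk }

theorem sum_submatrix_nonneg {ι : Type*} [Fintype ι] (hX : X.PosSemidef) (g : ι → n) :
    0 ≤ ∑ a, ∑ b, X (g a) (g b) := by
  simpa [dotProduct, mulVec, Finset.mul_sum] using (hX.submatrix g).dotProduct_mulVec_nonneg 1

theorem card_le_of_pairwise_eq_neg_inv {ι : Type*} [Fintype ι] (hX : X.PosSemidef)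
    (hdiag : ∀ i, X i i = 1) {m : ℕ} (hm : 2 ≤ m) (g : ι → n)
    (hg : Pairwise fun a b => X (g a) (g b) = -1 / ((m : ℝ) - 1)) :
    Fintype.card ι ≤ m := by
  classical
  set c : ℝ := -1 / ((m : ℝ) - 1)
  set k : ℝ := (Fintype.card ι : ℝ)
  have hentry : ∀ a b, X (g a) (g b) = c + if a = b then 1 - c else 0 := by
    intro a b
    by_cases hab : a = b
    · simp [hab, hdiag]
    · simp [hab, hg hab]
  have htotal : 0 ≤ k * (k * c + (1 - c)) := by
    have := hX.sum_submatrix_nonneg g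
    simp only [hentry, Finset.sum_add_distrib, Finset.sum_const, Finset.sum_ite_eq,
      Finset.mem_univ, if_true, Finset.card_univ, nsmul_eq_mul] at this
    linarith
  by_contra! hlt
  have hm1 : (0 : ℝ) < m - 1 := by
    have : (2 : ℝ) ≤ m := by exact_mod_cast hm
    linarith
  have hk : (m : ℝ) + 1 ≤ k := by simp only [k]; exact_mod_cast hlt
  have hc : c * ((m : ℝ) - 1) = -1 := by simp only [c]; field_simp
  have hrow : ((m : ℝ) - 1) * (k * c + (1 - c)) = m - k := by linear_combination (k - 1) * hc
  have hrow_neg : k * c + (1 - c) < 0 := by nlinarith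
  nlinarith

end Matrix.PosSemidef

theorem stmt0_general (n m : ℕ) (hm : 2 ≤ m) (G : SimpleGraph (Fin n))
    (X : Matrix (Fin n) (Fin n) ℝ)
    (hpsd : X.PosSemidef)
    (hentries : ∀ i j, X i j = 1 ∨ X i j = -1 / ((m : ℝ) - 1))
    (hdiag : ∀ i, X i i = 1)
    (hedge : ∀ i j, G.Adj i j → X i j = -1 / ((m : ℝ) - 1)) :
    ∃ c : Fin n → Fin m,
      (∀ i j, G.Adj i j → c i ≠ c j) ∧
      (∀ i j, (c i = c j → X i j = 1) ∧ (c i ≠ c j → X i j = -1 / ((m : ℝ) - 1))) := by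
  classical
  let s := hpsd.eqOneSetoid hdiag
  have hneg_ne_one : -1 / ((m : ℝ) - 1) ≠ 1 := by
    have : (1 : ℝ) < m := by exact_mod_cast hm
    exact ((div_neg_of_neg_of_pos (by norm_num) (by linarith)).trans one_pos).ne
  have hclasses : Pairwise fun a b : Quotient s => X a.out b.out = -1 / ((m : ℝ) - 1) :=
    fun a b hab => (hentries _ _).resolve_left fun h =>
      hab (by rw [← a.out_eq, ← b.out_eq]; exact Quotient.sound h)
  obtain ⟨c, hc⟩ := s.exists_fin_eq_iff_rel
    (hpsd.card_le_of_pairwise_eq_neg_inv hdiag hm Quotient.out hclasses)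
  refine ⟨c, fun i j hij hcij => hneg_ne_one ((hedge i j hij).symm.trans ((hc i j).mp hcij)),
    fun i j => ⟨(hc i j).mp, fun hcij => ?_⟩⟩
  exact (hentries i j).resolve_left (mt (hc i j).mpr hcij)

/-- If a matrix `X ∈ ℝ^{n×n}` is symmetric positive semidefinite, has rank
at most `m - 1`, has every entry in `{1, -1/(m-1)}`, has `X i i = 1` for every vertex, and
`X i j = -1/(m-1)` for every edge `{i,j}` of the graph `G`, then there is a proper
`m`-coloring `c` of `G` with `X i j = 1` whenever `c i = c j` and `X i j = -1/(m-1)`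
whenever `c i ≠ c j`. -/
theorem stmt0 (n m : ℕ) (hm : 2 ≤ m) (G : SimpleGraph (Fin n))
    (X : Matrix (Fin n) (Fin n) ℝ)
    (hpsd : X.PosSemidef)
    (hrank : X.rank ≤ m - 1)
    (hentries : ∀ i j, X i j = 1 ∨ X i j = -1 / ((m : ℝ) - 1))
    (hdiag : ∀ i, X i i = 1)
    (hedge : ∀ i j, G.Adj i j → X i j = -1 / ((m : ℝ) - 1)) :
    ∃ c : Fin n → Fin m,
      (∀ i j, G.Adj i j → c i ≠ c j) ∧
      (∀ i j, (c i = c j → X i j = 1) ∧ (c i ≠ c j → X i j = -1 / ((m : ℝ) - 1))) :=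
  stmt0_general n m hm G X hpsd hentries hdiag hedge
end

section
/- Let G = (V, E) be a simple graph on vertex set V = {1, ..., n} and let m ≥ 2. Then G admits a proper m-coloring if and only if there exists a matrix X ∈ ℝ^{n×n} that is symmetric positive semidefinite, has rank at most m − 1, has every entry in {1, −1/(m−1)}, satisfies x_{ii} = 1 for all i ∈ V, and satisfies x_{ij} = −1/(m−1) for all {i, j} ∈ E. -/
/-!
A proper `m`-colouring `c` gives the matrix `X i j = Y (c i) (c j)`, where `Y` is the Gram matrix
of the `m` vertices of a regular simplex centred at the origin and scaled to unit length: `Y` is a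
positive multiple of the centring projection `1 - J / m`, so it is positive semidefinite, and it
kills the all-ones vector, so its rank is at most `m - 1`.

Conversely, for a positive semidefinite `X` with unit diagonal, `X i j = 1` forces
`(e_i - e_j)ᴴ X (e_i - e_j) = 0`, hence rows `i` and `j` of `X` coincide. Vertices with pairwise
distinct rows therefore have all mutual entries `-1/(m-1)`, and testing `X` against the indicator
vector of `k` of them gives `0 ≤ k (m - k) / (m - 1)`, so there are at most `m` distinct rows.
Colouring each vertex by its row is proper, since adjacent vertices have distinct rows.
-/

open Finset
open scoped ComplexOrder

namespace Matrix

theorem rank_lt_card_of_mulVec_eq_zero {K m n : Type*} [Field K] [Fintype n] (A : Matrix m n K)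
    {v : n → K} (hv : v ≠ 0) (hAv : A *ᵥ v = 0) : A.rank < Fintype.card n := by
  have hker : 0 < Module.finrank K (LinearMap.ker A.mulVecLin) :=
    Module.finrank_pos_iff_exists_ne_zero.mpr ⟨⟨v, hAv⟩, fun h => hv (congrArg Subtype.val h)⟩
  have hrank_nullity := LinearMap.finrank_range_add_finrank_ker A.mulVecLin
  rw [Module.finrank_fintype_fun_eq_card] at hrank_nullity
  rw [rank]
  omega

section Simplex

variable {ι : Type*} [Fintype ι] [DecidableEq ι]

variable (ι) in
noncomputable def simplexGram : Matrix ι ι ℝ :=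
  of fun k l => if k = l then 1 else -1 / ((Fintype.card ι : ℝ) - 1)

variable (ι) in
noncomputable def centering : Matrix ι ι ℝ :=
  1 - (Fintype.card ι : ℝ)⁻¹ • of fun _ _ => 1

theorem centering_conjTranspose_mul_self [Nonempty ι] :
    (centering ι)ᴴ * centering ι = centering ι := by
  ext i j
  have hcard : (Fintype.card ι : ℝ) ≠ 0 := by positivity
  simp [centering, mul_apply, one_apply, sub_mul, mul_sub, Finset.sum_sub_distrib, card_univ]

theorem centering_mulVec_one [Nonempty ι] : centering ι *ᵥ 1 = 0 := by
  have hcard : (Fintype.card ι : ℝ) ≠ 0 := by positivity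
  rw [centering, sub_mulVec, one_mulVec, smul_mulVec]
  ext i
  simp [mulVec, dotProduct, hcard]

theorem simplexGram_eq_smul_centering (h : 1 < Fintype.card ι) :
    simplexGram ι = ((Fintype.card ι : ℝ) / (Fintype.card ι - 1)) • centering ι := by
  have hcard : (Fintype.card ι : ℝ) - 1 ≠ 0 := by
    have : (1 : ℝ) < Fintype.card ι := by exact_mod_cast h
    linarith
  ext i j
  by_cases hij : i = j <;> simp [Matrix.simplexGram, centering, hij] <;> field_simp

theorem posSemidef_simplexGram (h : 1 < Fintype.card ι) : (simplexGram ι).PosSemidef := by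
  have : Nonempty ι := Fintype.card_pos_iff.mp (by omega)
  have hcard : (1 : ℝ) < Fintype.card ι := by exact_mod_cast h
  rw [simplexGram_eq_smul_centering h, ← centering_conjTranspose_mul_self]
  exact (posSemidef_conjTranspose_mul_self _).smul (div_nonneg (by linarith) (by linarith))

theorem rank_simplexGram_le (h : 1 < Fintype.card ι) :
    (simplexGram ι).rank ≤ Fintype.card ι - 1 := by
  have : Nonempty ι := Fintype.card_pos_iff.mp (by omega)
  have := rank_lt_card_of_mulVec_eq_zero (simplexGram ι) one_ne_zero (by
    rw [simplexGram_eq_smul_centering h, smul_mulVec, centering_mulVec_one, smul_zero])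
  omega

end Simplex

namespace PosSemidef

variable {n : Type*} [Fintype n]

theorem row_eq_of_diag_eq {𝕜 : Type*} [RCLike 𝕜] [DecidableEq n] {X : Matrix n n 𝕜}
    (hX : X.PosSemidef) {i j : n} (hi : X i i = X i j) (hj : X j j = X i j) :
    X.row i = X.row j := by
  set v : n → 𝕜 := Pi.single i 1 - Pi.single j 1
  have hstar : star v = v := by
    ext k
    simp [v, Pi.single_apply]
  have hji : X j i = X i j := by
    rw [← hX.isHermitian.apply j i, ← hi, hX.isHermitian.apply i i]
  have hquad : star v ⬝ᵥ X *ᵥ v = 0 := by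
    simp [hstar, v, mulVec_sub, sub_dotProduct, dotProduct_sub, hi, hj, hji]
  have hcol := (hX.dotProduct_mulVec_zero_iff v).mp hquad
  ext k
  have hk : X k i = X k j := by
    simpa [v, mulVec_sub, sub_eq_zero] using congrFun hcol k
  rw [row_apply, row_apply, ← hX.isHermitian.apply i k, ← hX.isHermitian.apply j k, hk]

theorem sum_sum_nonneg {X : Matrix n n ℝ} (hX : X.PosSemidef) (T : Finset n) :
    0 ≤ ∑ i ∈ T, ∑ j ∈ T, X i j := by
  classical
  simpa [dotProduct, mulVec, Finset.sum_ite_mem] using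
    hX.dotProduct_mulVec_nonneg (fun i => if i ∈ T then 1 else 0)

theorem card_le_of_offDiag_eq {X : Matrix n n ℝ} (hX : X.PosSemidef) {m : ℕ} (hm : 1 < m)
    {T : Finset n} (hdiag : ∀ i ∈ T, X i i = 1)
    (hoff : ∀ i ∈ T, ∀ j ∈ T, i ≠ j → X i j = -1 / ((m : ℝ) - 1)) : #T ≤ m := by
  classical
  have hm' : (0 : ℝ) < m - 1 := by
    have : (1 : ℝ) < m := by exact_mod_cast hm
    linarith
  have hrow : ∀ i ∈ T, ∑ j ∈ T, X i j = 1 - (#T - 1) / ((m : ℝ) - 1) := by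
    intro i hi
    rw [← add_sum_erase T _ hi, hdiag i hi,
      sum_congr rfl fun j hj => hoff i hi j (mem_of_mem_erase hj) (ne_of_mem_erase hj).symm]
    rw [sum_const, card_erase_of_mem hi, nsmul_eq_mul, Nat.cast_pred (card_pos.mpr ⟨i, hi⟩)]
    ring
  have htotal := hX.sum_sum_nonneg T
  rw [sum_congr rfl hrow, sum_const, nsmul_eq_mul] at htotal
  by_contra! hT
  have hT' : (m : ℝ) < #T := by exact_mod_cast hT
  have hrow_neg : 1 - (#T - 1) / ((m : ℝ) - 1) < 0 := by
    rw [sub_neg, one_lt_div hm']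
    linarith
  nlinarith

theorem card_image_row_le [DecidableEq n] {X : Matrix n n ℝ} (hX : X.PosSemidef) {m : ℕ}
    (hm : 1 < m) (hent : ∀ i j, X i j = 1 ∨ X i j = -1 / ((m : ℝ) - 1))
    (hdiag : ∀ i, X i i = 1) : #(univ.image X.row) ≤ m := by
  obtain ⟨T, -, hinj, himage⟩ := exists_subset_injOn_image_eq_of_surjOn
    (f := X.row) Set.univ (univ.image X.row) fun y hy => by simpa using hy
  rw [← himage, card_image_of_injOn hinj]
  refine hX.card_le_of_offDiag_eq hm (fun i _ => hdiag i) fun i hi j hj hij => ?_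
  refine (hent i j).resolve_left fun h => hij (hinj hi hj ?_)
  exact hX.row_eq_of_diag_eq (h ▸ hdiag i) (h ▸ hdiag j)

end PosSemidef

end Matrix

theorem SimpleGraph.colorable_of_posSemidef {V : Type*} [Fintype V] [DecidableEq V]
    (G : SimpleGraph V) {m : ℕ} (hm : 1 < m) {X : Matrix V V ℝ} (hX : X.PosSemidef)
    (hent : ∀ i j, X i j = 1 ∨ X i j = -1 / ((m : ℝ) - 1)) (hdiag : ∀ i, X i i = 1)
    (hedge : ∀ i j, G.Adj i j → X i j = -1 / ((m : ℝ) - 1)) : G.Colorable m := by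
  have hneg : -1 / ((m : ℝ) - 1) < 1 := by
    have : (1 : ℝ) < m := by exact_mod_cast hm
    have : -1 / ((m : ℝ) - 1) < 0 := div_neg_of_neg_of_pos (by norm_num) (by linarith)
    linarith
  let C : G.Coloring (univ.image X.row) :=
    Coloring.mk (fun i => ⟨X.row i, mem_image_of_mem X.row (mem_univ i)⟩) fun {i j} hij h => by
      have hj := congrFun (congrArg Subtype.val h) j
      simp only [Matrix.row_apply, hedge i j hij, hdiag j] at hj
      exact hneg.ne hj
  exact C.colorable.mono (by simpa using hX.card_image_row_le hm hent hdiag)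

/-- A graph `G` on `n` vertices admits a proper `m`-coloring if and only if
there exists a symmetric positive semidefinite matrix `X ∈ ℝ^{n×n}` of rank at most `m - 1`
with all entries in `{1, -1/(m-1)}`, ones on the diagonal, and `-1/(m-1)` at every edge. -/
theorem stmt2 (n m : ℕ) (hm : 2 ≤ m) (G : SimpleGraph (Fin n)) :
    (∃ c : Fin n → Fin m, ∀ i j, G.Adj i j → c i ≠ c j) ↔
    (∃ X : Matrix (Fin n) (Fin n) ℝ,
      X.PosSemidef ∧
      X.rank ≤ m - 1 ∧
      (∀ i j, X i j = 1 ∨ X i j = -1 / ((m : ℝ) - 1)) ∧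
      (∀ i, X i i = 1) ∧
      (∀ i j, G.Adj i j → X i j = -1 / ((m : ℝ) - 1))) := by
  constructor
  · rintro ⟨c, hc⟩
    have hcard : 1 < Fintype.card (Fin m) := by rwa [Fintype.card_fin]
    refine ⟨(Matrix.simplexGram (Fin m)).submatrix c c,
      (Matrix.posSemidef_simplexGram hcard).submatrix c,
      ?_, fun i j => ?_, fun i => ?_, fun i j hij => ?_⟩
    · simpa using (Matrix.rank_submatrix_le _ c c).trans (Matrix.rank_simplexGram_le hcard)
    · by_cases h : c i = c j <;> simp [Matrix.simplexGram, h]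
    · simp [Matrix.simplexGram]
    · simp [Matrix.simplexGram, hc i j hij]
  · rintro ⟨X, hX, -, hent, hdiag, hedge⟩
    obtain ⟨C⟩ := G.colorable_of_posSemidef hm hX hent hdiag hedge
    exact ⟨C, fun i j => C.valid⟩
end

section
/- Let m ≥ 2 and let C₂ = { X ∈ ℝ^{n×n} : X symmetric positive semidefinite, rank(X) ≤ m−1 }. Let X ∈ ℝ^{n×n} be symmetric with spectral decomposition X = Q Λ Qᵀ, where Q is orthogonal and Λ = diag(λ₁, ..., λₙ) with λ₁ ≥ λ₂ ≥ ... ≥ λₙ. Then the matrix Q Λ⁺_{m−1} Qᵀ, where Λ⁺_{m−1} = diag(max{0, λ₁}, ..., max{0, λ_{m−1}}, 0, ..., 0), belongs to C₂ and minimizes the Frobenius distance to X over C₂. -/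
open Matrix

/-- The Frobenius norm of a real `n × n` matrix. -/
noncomputable def frobNorm {n : ℕ} (A : Matrix (Fin n) (Fin n) ℝ) : ℝ :=
  Real.sqrt (∑ i, ∑ j, (A i j) ^ 2)

/-- The constraint set `C₂`: symmetric positive semidefinite `n × n` matrices of rank at
most `m - 1`. -/
def C2set (n m : ℕ) : Set (Matrix (Fin n) (Fin n) ℝ) :=
  {Y | Y.PosSemidef ∧ Y.rank ≤ m - 1}

/-! After conjugating by `Q` it suffices to compare with `diag λ`. A competitor `Y` can be written
`U diag ν Uᵀ` with `U` orthogonal and `ν` decreasing and nonnegative; since `rank Y ≤ m - 1`,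
`ν i = 0` for `i ≥ m - 1`. Expanding the square,
`‖U diag ν Uᵀ - diag λ‖² = ‖ν‖² - 2 λᵀ S ν + ‖λ‖²` with `S = (U i j ^ 2)` doubly stochastic, and
Birkhoff's theorem with the rearrangement inequality gives `λᵀ S ν ≤ λᵀ ν`. Hence
`‖Y - X‖² ≥ ∑ (ν i - λ i)²`, and termwise `(ν i - λ i)² ≥ (Λ⁺ i - λ i)²` because `max 0 (λ i)` is
the nonnegative number closest to `λ i`. -/

namespace Matrix

variable {ι : Type*} [Fintype ι]

theorem dotProduct_mulVec_le_of_mem_doublyStochastic [LinearOrder ι] {S : Matrix ι ι ℝ}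
    (hS : S ∈ doublyStochastic ℝ ι) {a b : ι → ℝ} (ha : Antitone a) (hb : Antitone b) :
    a ⬝ᵥ (S *ᵥ b) ≤ a ⬝ᵥ b := by
  have hlin : IsLinearMap ℝ fun S : Matrix ι ι ℝ => a ⬝ᵥ (S *ᵥ b) :=
    ⟨fun S T => by simp only [add_mulVec, dotProduct_add],
      fun c S => by simp only [smul_mulVec, dotProduct_smul]⟩
  rw [← SetLike.mem_coe, doublyStochastic_eq_convexHull_permMatrix] at hS
  refine convexHull_min ?_ (convex_halfSpace_le hlin _) hS
  rintro _ ⟨σ, rfl⟩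
  simpa [permMatrix_mulVec, dotProduct] using
    (ha.monovary hb).sum_smul_comp_perm_le_sum_smul (σ := σ)

theorem map_sq_mem_doublyStochastic [DecidableEq ι] {U : Matrix ι ι ℝ} (hU : Uᵀ * U = 1) :
    U.map (· ^ 2) ∈ doublyStochastic ℝ ι := by
  have hU' : U * Uᵀ = 1 := mul_eq_one_comm.mp hU
  refine mem_doublyStochastic_iff_sum.mpr ⟨fun i j => sq_nonneg _, fun i => ?_, fun j => ?_⟩
  · simpa [mul_apply, sq] using congr_fun (congr_fun hU' i) i
  · simpa [mul_apply, sq] using congr_fun (congr_fun hU j) j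

theorem sum_sq_eq_trace_transpose_mul (A : Matrix ι ι ℝ) :
    ∑ i, ∑ j, A i j ^ 2 = trace (Aᵀ * A) := by
  rw [Finset.sum_comm]
  simp [trace, mul_apply, sq]

theorem sum_sq_conj_orthogonal [DecidableEq ι] {U : Matrix ι ι ℝ} (hU : Uᵀ * U = 1)
    (A : Matrix ι ι ℝ) :
    ∑ i, ∑ j, (U * A * Uᵀ) i j ^ 2 = ∑ i, ∑ j, A i j ^ 2 := by
  have : (U * A * Uᵀ)ᵀ * (U * A * Uᵀ) = U * (Aᵀ * A) * Uᵀ := by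
    simp only [transpose_mul, transpose_transpose, Matrix.mul_assoc]
    rw [← Matrix.mul_assoc Uᵀ U, hU, Matrix.one_mul]
  rw [sum_sq_eq_trace_transpose_mul, sum_sq_eq_trace_transpose_mul, this, trace_mul_cycle,
    ← Matrix.mul_assoc, hU, Matrix.one_mul]

theorem sum_sq_diagonal [DecidableEq ι] (d : ι → ℝ) :
    ∑ i, ∑ j, diagonal d i j ^ 2 = ∑ i, d i ^ 2 := by
  simp [diagonal_apply, apply_ite (· ^ 2)]

theorem rank_conj_diagonal [DecidableEq ι] {U : Matrix ι ι ℝ} (hU : Uᵀ * U = 1) (d : ι → ℝ) :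
    (U * diagonal d * Uᵀ).rank = Fintype.card {i // d i ≠ 0} := by
  rw [rank_mul_eq_left_of_isUnit_det _ _ (isUnit_det_of_right_inverse hU),
    rank_mul_eq_right_of_isUnit_det _ _ (isUnit_det_of_left_inverse hU), rank_diagonal]

theorem posSemidef_conj_diagonal [DecidableEq ι] (U : Matrix ι ι ℝ) {d : ι → ℝ} (hd : 0 ≤ d) :
    (U * diagonal d * Uᵀ).PosSemidef := by
  simpa [conjTranspose_eq_transpose_of_trivial] using
    (posSemidef_diagonal_iff.mpr hd).mul_mul_conjTranspose_same U

theorem sum_sq_sub (A B : Matrix ι ι ℝ) :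
    ∑ i, ∑ j, (A - B) i j ^ 2
      = ∑ i, ∑ j, A i j ^ 2 - 2 * ∑ i, ∑ j, A i j * B i j + ∑ i, ∑ j, B i j ^ 2 := by
  simp only [Finset.mul_sum, ← Finset.sum_sub_distrib, ← Finset.sum_add_distrib]
  exact Finset.sum_congr rfl fun i _ => Finset.sum_congr rfl fun j _ => by
    rw [Matrix.sub_apply]; ring

theorem sum_mul_diagonal_conj_diagonal [DecidableEq ι] (U : Matrix ι ι ℝ) (a b : ι → ℝ) :
    ∑ i, ∑ j, (U * diagonal a * Uᵀ) i j * diagonal b i j = b ⬝ᵥ (U.map (· ^ 2) *ᵥ a) := by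
  simp only [diagonal_apply, mul_ite, mul_zero, Finset.sum_ite_eq, Finset.mem_univ, if_true]
  refine Finset.sum_congr rfl fun i _ => ?_
  rw [mul_apply]
  simp only [mul_diagonal, transpose_apply, mulVec, dotProduct, map_apply, Finset.sum_mul,
    Finset.mul_sum]
  exact Finset.sum_congr rfl fun k _ => by ring

/-- Hoffman–Wielandt inequality when one of the two matrices is diagonal. -/
theorem sum_sq_sub_le_sum_sq_conj_diagonal_sub_diagonal [LinearOrder ι]
    {U : Matrix ι ι ℝ} (hU : Uᵀ * U = 1) {a b : ι → ℝ} (ha : Antitone a) (hb : Antitone b) :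
    ∑ i, (a i - b i) ^ 2 ≤ ∑ i, ∑ j, (U * diagonal a * Uᵀ - diagonal b) i j ^ 2 := by
  have hcross :=
    dotProduct_mulVec_le_of_mem_doublyStochastic (map_sq_mem_doublyStochastic hU) hb ha
  have hexpand : ∑ i, (a i - b i) ^ 2 = ∑ i, a i ^ 2 - 2 * b ⬝ᵥ a + ∑ i, b i ^ 2 := by
    simp only [dotProduct, Finset.mul_sum, ← Finset.sum_sub_distrib, ← Finset.sum_add_distrib]
    exact Finset.sum_congr rfl fun i _ => by ring
  rw [sum_sq_sub, sum_sq_conj_orthogonal hU, sum_sq_diagonal, sum_sq_diagonal,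
    sum_mul_diagonal_conj_diagonal, hexpand]
  linarith

theorem conj_diagonal_eq_conj_diagonal_comp_perm [DecidableEq ι] (U : Matrix ι ι ℝ) (d : ι → ℝ)
    (σ : Equiv.Perm ι) :
    U * diagonal d * Uᵀ = U.submatrix id σ * diagonal (d ∘ σ) * (U.submatrix id σ)ᵀ := by
  rw [← submatrix_diagonal_equiv, transpose_submatrix, submatrix_mul_equiv,
    submatrix_mul_equiv, submatrix_id_id]

theorem transpose_mul_self_submatrix_perm [DecidableEq ι] {U : Matrix ι ι ℝ} (hU : Uᵀ * U = 1)
    (σ : Equiv.Perm ι) : (U.submatrix id σ)ᵀ * U.submatrix id σ = 1 := by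
  rw [transpose_submatrix, ← Equiv.coe_refl, submatrix_mul_equiv, hU, submatrix_one_equiv]

theorem PosSemidef.exists_orthogonal_antitone_diagonalization {n : ℕ}
    {Y : Matrix (Fin n) (Fin n) ℝ} (hY : Y.PosSemidef) :
    ∃ (U : Matrix (Fin n) (Fin n) ℝ) (ν : Fin n → ℝ),
      Uᵀ * U = 1 ∧ Antitone ν ∧ 0 ≤ ν ∧ Y = U * diagonal ν * Uᵀ := by
  have hH := hY.isHermitian
  set U : Matrix (Fin n) (Fin n) ℝ := (hH.eigenvectorUnitary : Matrix (Fin n) (Fin n) ℝ)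
  have hU : Uᵀ * U = 1 := by
    simpa [star_eq_conjTranspose, conjTranspose_eq_transpose_of_trivial] using
      mem_unitaryGroup_iff'.mp hH.eigenvectorUnitary.2
  have hYU : Y = U * diagonal hH.eigenvalues * Uᵀ := by
    simpa [star_eq_conjTranspose, conjTranspose_eq_transpose_of_trivial] using hH.spectral_theorem
  -- `eigenvalues` is an arbitrary reindexing of the decreasing list `eigenvalues₀`
  let σ : Equiv.Perm (Fin n) :=
    (finCongr (Fintype.card_fin n).symm).trans (Fintype.equivOfCardEq (Fintype.card_fin _))
  have hsorted : hH.eigenvalues ∘ σ = hH.eigenvalues₀ ∘ finCongr (Fintype.card_fin n).symm := by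
    ext i; simp [σ, IsHermitian.eigenvalues]
  refine ⟨U.submatrix id σ, hH.eigenvalues ∘ σ, transpose_mul_self_submatrix_perm hU σ, ?_,
    fun i => hY.eigenvalues_nonneg (σ i),
    hYU.trans (conj_diagonal_eq_conj_diagonal_comp_perm U _ σ)⟩
  rw [hsorted]
  exact hH.eigenvalues₀_antitone.comp_monotone fun _ _ h => h

end Matrix

theorem Antitone.eq_zero_of_card_ne_zero_le {α : Type*} [LinearOrder α] [Zero α] {n r : ℕ}
    {ν : Fin n → α} (hν : Antitone ν) (hν0 : 0 ≤ ν) (hcard : Fintype.card {i // ν i ≠ 0} ≤ r) {i : Fin n} (hi : r ≤ i) :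
    ν i = 0 := by
  by_contra hne
  have hpos : 0 < ν i := (hν0 i).lt_of_ne' hne
  have hsub : Finset.Iic i ⊆ ({j | ν j ≠ 0} : Finset (Fin n)) := fun j hj => by
    simpa using (hpos.trans_le (hν (Finset.mem_Iic.mp hj))).ne'
  have := Finset.card_le_card hsub
  rw [Fin.card_Iic, ← Fintype.card_subtype] at this
  omega

/-- The diagonal of `Λ⁺_r`. -/
def truncPosPart {n : ℕ} (r : ℕ) (lam : Fin n → ℝ) : Fin n → ℝ :=
  fun i => if (i : ℕ) < r then max 0 (lam i) else 0

theorem truncPosPart_nonneg {n : ℕ} (r : ℕ) (lam : Fin n → ℝ) : 0 ≤ truncPosPart r lam :=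
  fun i => by unfold truncPosPart; split_ifs <;> simp

theorem card_truncPosPart_ne_zero_le {n : ℕ} (r : ℕ) (lam : Fin n → ℝ) :
    Fintype.card {i // truncPosPart r lam i ≠ 0} ≤ r := by
  calc _ ≤ Fintype.card {i : Fin n // (i : ℕ) < r} :=
        Fintype.card_subtype_mono _ _ fun i hi => by
          by_contra hr
          exact hi (if_neg hr)
    _ ≤ r := by rw [Fintype.card_subtype, Fin.card_filter_val_lt]; exact min_le_right _ _

theorem sq_truncPosPart_sub_le {n r : ℕ} (lam : Fin n → ℝ) {i : Fin n} {x : ℝ} (hx : 0 ≤ x)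
    (hxr : r ≤ i → x = 0) : (truncPosPart r lam i - lam i) ^ 2 ≤ (x - lam i) ^ 2 := by
  unfold truncPosPart
  split_ifs with hi
  · rcases le_total 0 (lam i) with h | h
    · simp [max_eq_right h, sq_nonneg]
    · rw [max_eq_left h]; nlinarith
  · rw [hxr (not_lt.mp hi)]

theorem sum_sq_truncPosPart_sub_le {n r : ℕ} {Q : Matrix (Fin n) (Fin n) ℝ} (hQ : Qᵀ * Q = 1)
    {lam : Fin n → ℝ} (hlam : Antitone lam) {Y : Matrix (Fin n) (Fin n) ℝ} (hY : Y.PosSemidef)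
    (hrank : Y.rank ≤ r) :
    ∑ i, (truncPosPart r lam i - lam i) ^ 2
      ≤ ∑ i, ∑ j, (Y - Q * diagonal lam * Qᵀ) i j ^ 2 := by
  obtain ⟨U, ν, hU, hν, hν0, rfl⟩ := hY.exists_orthogonal_antitone_diagonalization
  rw [rank_conj_diagonal hU] at hrank
  have hQ' : Q * Qᵀ = 1 := mul_eq_one_comm.mp hQ
  set V := Qᵀ * U
  have hV : Vᵀ * V = 1 := by
    rw [transpose_mul, transpose_transpose, Matrix.mul_assoc, ← Matrix.mul_assoc Q, hQ',
      Matrix.one_mul, hU]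
  have hconj : U * diagonal ν * Uᵀ - Q * diagonal lam * Qᵀ
      = Q * (V * diagonal ν * Vᵀ - diagonal lam) * Qᵀ := by
    simp only [V, transpose_mul, transpose_transpose, Matrix.mul_sub, Matrix.sub_mul,
      ← Matrix.mul_assoc, hQ', Matrix.one_mul]
    simp only [Matrix.mul_assoc, hQ', Matrix.mul_one]
  calc ∑ i, (truncPosPart r lam i - lam i) ^ 2 ≤ ∑ i, (ν i - lam i) ^ 2 :=
        Finset.sum_le_sum fun i _ =>
          sq_truncPosPart_sub_le lam (hν0 i) (hν.eq_zero_of_card_ne_zero_le hν0 hrank)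
    _ ≤ ∑ i, ∑ j, (V * diagonal ν * Vᵀ - diagonal lam) i j ^ 2 :=
        sum_sq_sub_le_sum_sq_conj_diagonal_sub_diagonal hV hν hlam
    _ = _ := by rw [hconj, sum_sq_conj_orthogonal hQ]

theorem conj_truncPosPart_mem_C2set {n : ℕ} (m : ℕ) {Q : Matrix (Fin n) (Fin n) ℝ}
    (hQ : Qᵀ * Q = 1) (lam : Fin n → ℝ) :
    Q * diagonal (truncPosPart (m - 1) lam) * Qᵀ ∈ C2set n m := by
  refine ⟨posSemidef_conj_diagonal Q (truncPosPart_nonneg _ lam), ?_⟩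
  rw [rank_conj_diagonal hQ]
  exact card_truncPosPart_ne_zero_le _ lam

theorem frobNorm_conj_truncPosPart_sub_le {n m : ℕ} {Q : Matrix (Fin n) (Fin n) ℝ}
    (hQ : Qᵀ * Q = 1) {lam : Fin n → ℝ} (hlam : Antitone lam) {Y : Matrix (Fin n) (Fin n) ℝ}
    (hY : Y ∈ C2set n m) :
    frobNorm (Q * diagonal (truncPosPart (m - 1) lam) * Qᵀ - Q * diagonal lam * Qᵀ)
      ≤ frobNorm (Y - Q * diagonal lam * Qᵀ) := by
  rw [frobNorm, frobNorm, ← Matrix.sub_mul, ← Matrix.mul_sub, diagonal_sub,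
    sum_sq_conj_orthogonal hQ, sum_sq_diagonal]
  exact Real.sqrt_le_sqrt (sum_sq_truncPosPart_sub_le hQ hlam hY.1 hY.2)

theorem stmt11_general (n m : ℕ)
    (X Q : Matrix (Fin n) (Fin n) ℝ) (lam : Fin n → ℝ)
    (hQ : Qᵀ * Q = 1)
    (hlam : ∀ i j : Fin n, i ≤ j → lam j ≤ lam i)
    (hX : X = Q * Matrix.diagonal lam * Qᵀ) :
    Q * Matrix.diagonal (fun i : Fin n => if (i : ℕ) < m - 1 then max 0 (lam i) else 0) * Qᵀ
      ∈ C2set n m ∧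
    ∀ Y ∈ C2set n m,
      frobNorm (Q * Matrix.diagonal (fun i : Fin n => if (i : ℕ) < m - 1 then max 0 (lam i) else 0)
        * Qᵀ - X) ≤ frobNorm (Y - X) := by
  subst hX
  exact ⟨conj_truncPosPart_mem_C2set m hQ lam,
    fun Y hY => frobNorm_conj_truncPosPart_sub_le hQ (fun i j => hlam i j) hY⟩

/-- Let `X = Q Λ Qᵀ` be a spectral decomposition of a symmetric matrix `X`,
with `Q` orthogonal and eigenvalues `λ₁ ≥ ... ≥ λₙ`. Then `Q Λ⁺_{m-1} Qᵀ`, obtained by keeping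
the positive parts of the `m - 1` largest eigenvalues and zeroing the rest, belongs to `C₂`
and minimizes the Frobenius distance to `X` over `C₂`. -/
theorem stmt11 (n m : ℕ) (hm : 2 ≤ m)
    (X Q : Matrix (Fin n) (Fin n) ℝ) (lam : Fin n → ℝ)
    (hXsym : X.IsSymm)
    (hQ : Qᵀ * Q = 1)
    (hlam : ∀ i j : Fin n, i ≤ j → lam j ≤ lam i)
    (hX : X = Q * Matrix.diagonal lam * Qᵀ) :
    Q * Matrix.diagonal (fun i : Fin n => if (i : ℕ) < m - 1 then max 0 (lam i) else 0) * Qᵀ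
      ∈ C2set n m ∧
    ∀ Y ∈ C2set n m,
      frobNorm (Q * Matrix.diagonal (fun i : Fin n => if (i : ℕ) < m - 1 then max 0 (lam i) else 0)
        * Qᵀ - X) ≤ frobNorm (Y - X) :=
  stmt11_general n m X Q lam hQ hlam hX
end

section
/- Let H be a finite-dimensional real inner product space, let A, B ⊆ H be nonempty closed convex sets with A ∩ B ≠ ∅, and let λ ∈ (0, 2). Define the Douglas–Rachford operator T = (1 − λ/2) Id + (λ/2) R_B R_A, where R_C = 2 P_C − Id and P_C denotes the metric projection onto a closed convex set C. Then for any x₀ ∈ H, the sequence defined by x_{n+1} = T(x_n) converges to a point x* such that P_A(x*) ∈ A ∩ B. -/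
open Filter Topology
open scoped RealInnerProductSpace

section Aux
variable {H : Type*} [NormedAddCommGroup H] [InnerProductSpace ℝ H]

lemma dr_aux_var [CompleteSpace H] {A : Set H} (hconv : Convex ℝ A) {P : H → H}
    (hP : ∀ x, P x ∈ A ∧ ∀ a ∈ A, ‖P x - x‖ ≤ ‖a - x‖) (x : H) :
    ∀ a ∈ A, ⟪x - P x, a - P x⟫ ≤ 0 := by
  have h1 : ‖x - P x‖ = ⨅ w : A, ‖x - w‖ := by
    haveI : Nonempty A := ⟨⟨P x, (hP x).1⟩⟩
    apply le_antisymm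
    · apply le_ciInf
      intro w
      rw [show ‖x - P x‖ = ‖P x - x‖ from norm_sub_rev _ _,
        show ‖x - (w:H)‖ = ‖(w:H) - x‖ from norm_sub_rev _ _]
      exact (hP x).2 w w.2
    · have hb : BddBelow (Set.range fun w : A => ‖x - (w : H)‖) := by
        refine ⟨0, ?_⟩
        rintro r ⟨w, rfl⟩
        exact norm_nonneg _
      exact ciInf_le hb ⟨P x, (hP x).1⟩
  exact (norm_eq_iInf_iff_real_inner_le_zero hconv (hP x).1).mp h1

lemma dr_aux_firm [CompleteSpace H] {A : Set H} (hconv : Convex ℝ A) {P : H → H}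
    (hP : ∀ x, P x ∈ A ∧ ∀ a ∈ A, ‖P x - x‖ ≤ ‖a - x‖) (x y : H) :
    ‖P x - P y‖ ^ 2 ≤ ⟪x - y, P x - P y⟫ := by
  have h1 := dr_aux_var hconv hP x (P y) (hP y).1
  have h2 := dr_aux_var hconv hP y (P x) (hP x).1
  rw [← real_inner_self_eq_norm_sq]
  simp only [inner_sub_left, inner_sub_right] at h1 h2 ⊢
  linarith [real_inner_comm x (P x), real_inner_comm x (P y), real_inner_comm y (P x),
    real_inner_comm y (P y), real_inner_comm (P x) (P y)]

lemma dr_aux_refl [CompleteSpace H] {A : Set H} (hconv : Convex ℝ A) {P : H → H}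
    (hP : ∀ x, P x ∈ A ∧ ∀ a ∈ A, ‖P x - x‖ ≤ ‖a - x‖) (x y : H) :
    ‖((2:ℝ) • P x - x) - ((2:ℝ) • P y - y)‖ ≤ ‖x - y‖ := by
  have hf := dr_aux_firm hconv hP x y
  have e : ((2:ℝ) • P x - x) - ((2:ℝ) • P y - y) = (2:ℝ) • (P x - P y) - (x - y) := by
    module
  have h3 := norm_sub_sq_real ((2:ℝ) • (P x - P y)) (x - y)
  have h4 : ⟪((2:ℝ) • (P x - P y)), (x - y)⟫ = 2 * ⟪P x - P y, x - y⟫ :=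
    real_inner_smul_left _ _ _
  have h5 : ‖(2:ℝ) • (P x - P y)‖ ^ 2 = 4 * ‖P x - P y‖ ^ 2 := by
    rw [norm_smul, mul_pow, Real.norm_eq_abs, sq_abs]; ring
  have h6 : ⟪x - y, P x - P y⟫ = ⟪P x - P y, x - y⟫ := real_inner_comm _ _
  have hsq : ‖((2:ℝ) • P x - x) - ((2:ℝ) • P y - y)‖ ^ 2 ≤ ‖x - y‖ ^ 2 := by
    rw [e, h3, h4, h5]; nlinarith
  nlinarith [norm_nonneg (((2:ℝ) • P x - x) - ((2:ℝ) • P y - y)), norm_nonneg (x - y)]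

lemma dr_aux_avg (a : ℝ) (u v : H) :
    ‖(1 - a) • u + a • v‖ ^ 2
      = (1 - a) * ‖u‖ ^ 2 + a * ‖v‖ ^ 2 - a * (1 - a) * ‖u - v‖ ^ 2 := by
  have h1 := norm_add_sq_real ((1 - a) • u) (a • v)
  have h2 := norm_sub_sq_real u v
  have h3 : ⟪((1 - a) • u), (a • v)⟫ = (1 - a) * (a * ⟪u, v⟫) := by
    rw [real_inner_smul_left, real_inner_smul_right]
  have e1 : ‖(1 - a) • u‖ ^ 2 = (1 - a) ^ 2 * ‖u‖ ^ 2 := by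
    rw [norm_smul, mul_pow, Real.norm_eq_abs, sq_abs]
  have e2 : ‖a • v‖ ^ 2 = a ^ 2 * ‖v‖ ^ 2 := by
    rw [norm_smul, mul_pow, Real.norm_eq_abs, sq_abs]
  rw [h1, h3, e1, e2, h2]; ring

end Aux

set_option maxHeartbeats 1000000 in
/-- Convergence of the Douglas–Rachford iteration for two nonempty closed
convex sets `A`, `B` with `A ∩ B ≠ ∅` in a finite-dimensional real inner product space: for
`λ ∈ (0, 2)` and `T = (1 - λ/2) Id + (λ/2) R_B R_A`, every orbit converges to a point `x*`
with `P_A x* ∈ A ∩ B`. -/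
theorem stmt13 {H : Type*} [NormedAddCommGroup H] [InnerProductSpace ℝ H]
    [FiniteDimensional ℝ H]
    (A B : Set H) (hAne : A.Nonempty) (hBne : B.Nonempty)
    (hAclosed : IsClosed A) (hBclosed : IsClosed B)
    (hAconv : Convex ℝ A) (hBconv : Convex ℝ B)
    (hAB : (A ∩ B).Nonempty)
    (lam : ℝ) (hlam0 : 0 < lam) (hlam2 : lam < 2)
    (PA PB : H → H)
    (hPA : ∀ x, PA x ∈ A ∧ ∀ a ∈ A, ‖PA x - x‖ ≤ ‖a - x‖)
    (hPB : ∀ x, PB x ∈ B ∧ ∀ b ∈ B, ‖PB x - x‖ ≤ ‖b - x‖)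
    (T : H → H)
    (hT : ∀ x, T x =
      (1 - lam / 2) • x +
        (lam / 2) • (2 • PB (2 • PA x - x) - (2 • PA x - x)))
    (x0 : H) (x : ℕ → H) (hx0 : x 0 = x0) (hx : ∀ k, x (k + 1) = T (x k)) :
    ∃ xs : H, Tendsto x atTop (nhds xs) ∧ PA xs ∈ A ∩ B := by
  haveI : CompleteSpace H := FiniteDimensional.complete ℝ H
  obtain ⟨p, hpA, hpB⟩ := hAB
  set α : ℝ := lam / 2 with hα
  have hα0 : 0 < α := div_pos hlam0 two_pos
  have hα1 : α < 1 := by rw [hα]; linarith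
  have hcast : ∀ z : H, (2 : ℕ) • z = (2 : ℝ) • z := fun z => by
    rw [two_smul, two_smul]
  set RA : H → H := fun z => (2:ℝ) • PA z - z with hRA
  set RB : H → H := fun z => (2:ℝ) • PB z - z with hRB
  set N : H → H := fun z => RB (RA z) with hN
  have hTN : ∀ z, T z = (1 - α) • z + α • N z := by
    intro z
    rw [hT z]
    simp only [hcast, hN, hRB, hRA, hα]
  -- nonexpansiveness
  have hRAne : ∀ u v, ‖RA u - RA v‖ ≤ ‖u - v‖ := fun u v => dr_aux_refl hAconv hPA u v
  have hRBne : ∀ u v, ‖RB u - RB v‖ ≤ ‖u - v‖ := fun u v => dr_aux_refl hBconv hPB u v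
  have hNne : ∀ u v, ‖N u - N v‖ ≤ ‖u - v‖ := fun u v =>
    (hRBne (RA u) (RA v)).trans (hRAne u v)
  -- p is a fixed point
  have hPAp : PA p = p := by
    have h1 : ‖PA p - p‖ ≤ ‖p - p‖ := (hPA p).2 p hpA
    have h2 : ‖PA p - p‖ = 0 := le_antisymm (by simpa using h1) (norm_nonneg _)
    have := norm_eq_zero.mp h2
    exact sub_eq_zero.mp this
  have hPBp : PB p = p := by
    have h1 : ‖PB p - p‖ ≤ ‖p - p‖ := (hPB p).2 p hpB
    have h2 : ‖PB p - p‖ = 0 := le_antisymm (by simpa using h1) (norm_nonneg _)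
    exact sub_eq_zero.mp (norm_eq_zero.mp h2)
  have hRAp : RA p = p := by rw [hRA]; simp only [hPAp]; module
  have hNp : N p = p := by rw [hN]; simp only [hRAp]; rw [hRB]; simp only [hPBp]; module
  -- key inequality
  have key : ∀ q, N q = q → ∀ z,
      ‖T z - q‖ ^ 2 ≤ ‖z - q‖ ^ 2 - α * (1 - α) * ‖N z - z‖ ^ 2 := by
    intro q hq z
    have e : T z - q = (1 - α) • (z - q) + α • (N z - q) := by rw [hTN]; module
    rw [e, dr_aux_avg]
    have h1 : ‖N z - q‖ ≤ ‖z - q‖ := by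
      have := hNne z q; rwa [hq] at this
    have h2 : ‖(z - q) - (N z - q)‖ = ‖N z - z‖ := by
      rw [show (z - q) - (N z - q) = -(N z - z) by module, norm_neg]
    rw [h2]
    have hB2 : ‖N z - q‖ ^ 2 ≤ ‖z - q‖ ^ 2 := by
      nlinarith [norm_nonneg (N z - q)]
    nlinarith [mul_nonneg hα0.le (sub_nonneg.mpr hB2)]
  have step : ∀ q, N q = q → ∀ n,
      ‖x (n+1) - q‖ ^ 2 ≤ ‖x n - q‖ ^ 2 - α * (1 - α) * ‖N (x n) - x n‖ ^ 2 :=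
    fun q hq n => by rw [hx n]; exact key q hq (x n)
  have mono : ∀ q, N q = q → ∀ n, ‖x (n+1) - q‖ ≤ ‖x n - q‖ := by
    intro q hq n
    have h := step q hq n
    nlinarith [norm_nonneg (x (n+1) - q), norm_nonneg (x n - q),
      mul_nonneg (mul_nonneg hα0.le (by linarith : (0:ℝ) ≤ 1 - α)) (sq_nonneg ‖N (x n) - x n‖)]
  -- boundedness
  have hanti : Antitone fun n => ‖x n - p‖ := antitone_nat_of_succ_le (mono p hNp)
  have hmem : ∀ n, x n ∈ Metric.closedBall p ‖x 0 - p‖ := fun n => by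
    rw [Metric.mem_closedBall, dist_eq_norm]
    exact hanti (Nat.zero_le n)
  obtain ⟨xs, -, φ, hφ, hlim⟩ :=
    tendsto_subseq_of_bounded (Metric.isBounded_closedBall (x := p) (r := ‖x 0 - p‖)) hmem
  -- asymptotic regularity
  set d2 : ℕ → ℝ := fun n => ‖x n - p‖ ^ 2 with hd2
  have hd2anti : Antitone d2 := antitone_nat_of_succ_le fun n => by
    have h := step p hNp n
    simp only [hd2]
    nlinarith [mul_nonneg (mul_nonneg hα0.le (by linarith : (0:ℝ) ≤ 1 - α))
      (sq_nonneg ‖N (x n) - x n‖)]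
  have hd2bdd : BddBelow (Set.range d2) := by
    refine ⟨0, ?_⟩; rintro r ⟨n, rfl⟩; positivity
  have hd2conv : Tendsto d2 atTop (𝓝 (⨅ n, d2 n)) := tendsto_atTop_ciInf hd2anti hd2bdd
  have hdiff : Tendsto (fun n => d2 n - d2 (n+1)) atTop (𝓝 0) := by
    have h2 : Tendsto (fun n => d2 (n+1)) atTop (𝓝 (⨅ n, d2 n)) :=
      hd2conv.comp (tendsto_add_atTop_nat 1)
    simpa using hd2conv.sub h2
  have hxdiff : ∀ n, x (n+1) - x n = α • (N (x n) - x n) := fun n => by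
    rw [hx n, hTN]; module
  have hsq0 : Tendsto (fun n => ‖x (n+1) - x n‖ ^ 2) atTop (𝓝 0) := by
    have hbound : ∀ n, ‖x (n+1) - x n‖ ^ 2 ≤ (α / (1 - α)) * (d2 n - d2 (n+1)) := by
      intro n
      have h := step p hNp n
      have e : ‖x (n+1) - x n‖ ^ 2 = α ^ 2 * ‖N (x n) - x n‖ ^ 2 := by
        rw [hxdiff n, norm_smul, mul_pow, Real.norm_eq_abs, sq_abs]
      have h1α : (0:ℝ) < 1 - α := by linarith
      simp only [hd2]
      rw [e, div_mul_eq_mul_div, le_div_iff₀ h1α]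
      nlinarith [mul_nonneg hα0.le (by nlinarith [sq_nonneg ‖N (x n) - x n‖] :
        (0:ℝ) ≤ ‖x n - p‖ ^ 2 - ‖x (n+1) - p‖ ^ 2 - α * (1 - α) * ‖N (x n) - x n‖ ^ 2)]
    have hg : Tendsto (fun n => (α / (1 - α)) * (d2 n - d2 (n+1))) atTop (𝓝 0) := by
      simpa using hdiff.const_mul (α / (1 - α))
    exact squeeze_zero (fun n => by positivity) hbound hg
  have hstep0 : Tendsto (fun n => ‖x (n+1) - x n‖) atTop (𝓝 0) := by
    have h := (Real.continuous_sqrt.tendsto 0).comp hsq0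
    simp only [Real.sqrt_zero] at h
    have e : (Real.sqrt ∘ fun n => ‖x (n+1) - x n‖ ^ 2) = fun n => ‖x (n+1) - x n‖ :=
      funext fun n => by simp [Real.sqrt_sq (norm_nonneg _)]
    rwa [e] at h
  -- the subsequential limit is a fixed point
  have h1 : Tendsto (fun k => x (φ k + 1)) atTop (𝓝 xs) := by
    have h2 : Tendsto (fun k => x (φ k + 1) - x (φ k)) atTop (𝓝 0) := by
      rw [tendsto_zero_iff_norm_tendsto_zero]
      exact hstep0.comp hφ.tendsto_atTop
    have h3 := hlim.add h2
    have e4 : ∀ k, (x ∘ φ) k + (x (φ k + 1) - x (φ k)) = x (φ k + 1) := fun k => by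
      simp [Function.comp]
    simpa [e4] using h3
  have hNlip : LipschitzWith 1 N := LipschitzWith.of_dist_le_mul fun u v => by
    simpa [dist_eq_norm] using hNne u v
  have hTcont : Continuous T := by
    have he : T = fun z => (1 - α) • z + α • N z := funext hTN
    rw [he]
    exact (continuous_id.const_smul _).add (hNlip.continuous.const_smul _)
  have hfix : T xs = xs := by
    have hA2 : Tendsto (fun k => T (x (φ k))) atTop (𝓝 (T xs)) := (hTcont.tendsto xs).comp hlim
    have e : (fun k => T (x (φ k))) = fun k => x (φ k + 1) := funext fun k => (hx (φ k)).symm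
    rw [e] at hA2
    exact tendsto_nhds_unique hA2 h1
  have hNxs : N xs = xs := by
    have h0 : α • (N xs - xs) = ((1 - α) • xs + α • N xs) - xs := by module
    rw [← hTN, hfix, sub_self] at h0
    have := (smul_eq_zero.mp h0).resolve_left (ne_of_gt hα0)
    exact sub_eq_zero.mp this
  -- full convergence
  have hanti2 : Antitone fun n => ‖x n - xs‖ := antitone_nat_of_succ_le (mono xs hNxs)
  have hsub0 : Tendsto (fun k => ‖x (φ k) - xs‖) atTop (𝓝 0) := by
    have h := tendsto_iff_norm_sub_tendsto_zero.mp hlim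
    simpa [Function.comp] using h
  have hconv : Tendsto (fun n => ‖x n - xs‖) atTop (𝓝 0) := by
    rw [Metric.tendsto_atTop] at hsub0 ⊢
    intro ε hε
    obtain ⟨k, hk⟩ := hsub0 ε hε
    refine ⟨φ k, fun n hn => ?_⟩
    have h1 := hk k le_rfl
    rw [Real.dist_eq, sub_zero, abs_of_nonneg (norm_nonneg _)] at h1 ⊢
    exact lt_of_le_of_lt (hanti2 hn) h1
  refine ⟨xs, tendsto_iff_norm_sub_tendsto_zero.mpr hconv, (hPA xs).1, ?_⟩
  -- PA xs ∈ B
  have e1 : (2:ℝ) • PB (RA xs) - RA xs = xs := hNxs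
  have e2 : (2:ℝ) • PB (RA xs) = (2:ℝ) • PA xs := by
    have : RA xs = (2:ℝ) • PA xs - xs := rfl
    rw [this] at e1
    linear_combination (norm := module) e1
  have e3 : PB (RA xs) = PA xs := smul_right_injective H two_ne_zero e2
  rw [← e3]
  exact (hPB (RA xs)).1
end

section
/- Let H be a finite-dimensional real inner product space and let C ⊆ H be a nonempty closed set. Then C is convex if and only if for every x ∈ H there is exactly one point p ∈ C with ‖p − x‖ = inf_{c ∈ C} ‖c − x‖, i.e., the projector onto C is everywhere single-valued. -/
/-!
If `C` is convex, the midpoint of two nearest points of `x` lies in `C`, and by the parallelogram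
law it would be strictly nearer to `x` unless the two points coincide.

Conversely, suppose every `x` has a unique nearest point `P x`. Compactness of closed balls makes
`P` continuous, and then `P` is the gradient of Asplund's function `φ = ½‖·‖² - ½ d_C²`, which is
the convex function `sup_{c ∈ C} (⟪c, ·⟫ - ½‖c‖²)`. For `y = θ a + μ b` with `a, b ∈ C`, the
function `φ - ⟪y, ·⟫` is bounded below by the corresponding combination of the affine minorants
at `a` and `b`, so for `ε > 0` the coercive function `φ - ⟪y, ·⟫ + ½ ε ‖·‖²` has a minimiser `x_ε`.
Its critical-point equation reads `P x_ε = y - ε x_ε`, and `ε ‖x_ε‖²` stays bounded, so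
`P x_ε → y` as `ε → 0` and `y ∈ C`.
-/

open Metric Filter Asymptotics
open scoped RealInnerProductSpace Topology

section NormedGroup

variable {E : Type*} [NormedAddCommGroup E] {C : Set E}

def IsNearestPointMap (C : Set E) (P : E → E) : Prop :=
  ∀ x, P x ∈ C ∧ ‖P x - x‖ = infDist x C

theorem IsNearestPointMap.continuous [ProperSpace E] {P : E → E} (hC : IsClosed C)
    (hP : IsNearestPointMap C P) (huniq : ∀ x p, p ∈ C → ‖p - x‖ = infDist x C → p = P x) :
    Continuous P := by
  refine continuous_iff_continuousAt.2 fun x => ?_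
  have hnear : ∀ z, ‖P z - x‖ ≤ infDist x C + 2 * dist z x := fun z =>
    calc ‖P z - x‖ ≤ ‖P z - z‖ + ‖z - x‖ := norm_sub_le_norm_sub_add_norm_sub _ _ _
      _ = infDist z C + dist z x := by rw [(hP z).2, dist_eq_norm]
      _ ≤ infDist x C + 2 * dist z x := by
        linarith [infDist_le_infDist_add_dist (x := z) (y := x) (s := C)]
  have hball : ∀ δ > 0, ∀ᶠ z in 𝓝 x, P z ∈ closedBall x (infDist x C + δ) := fun δ hδ => by
    filter_upwards [ball_mem_nhds x (half_pos hδ)] with z hz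
    rw [mem_ball] at hz
    rw [mem_closedBall, dist_eq_norm]
    linarith [hnear z]
  refine (isCompact_closedBall x (infDist x C + 1)).tendsto_nhds_of_unique_mapClusterPt
    (hball 1 one_pos) fun p _ hp => ?_
  have hpC : p ∈ C := hC.mem_of_mapClusterPt hp (Eventually.of_forall fun z => (hP z).1)
  refine huniq x p hpC (le_antisymm (le_of_forall_pos_le_add fun δ hδ => ?_) ?_)
  · have hpδ := isClosed_closedBall.mem_of_mapClusterPt hp (hball δ hδ)
    rwa [mem_closedBall, dist_eq_norm] at hpδ
  · rw [← dist_eq_norm, dist_comm]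
    exact infDist_le_dist_of_mem hpC

noncomputable def asplundFunction (C : Set E) (z : E) : ℝ :=
  (‖z‖ ^ 2 - infDist z C ^ 2) / 2

theorem continuous_asplundFunction : Continuous (asplundFunction C) := by
  unfold asplundFunction
  have := continuous_infDist_pt (α := E) C
  fun_prop

end NormedGroup

section InnerProduct

variable {H : Type*} [NormedAddCommGroup H] [InnerProductSpace ℝ H] {C : Set H}

theorem Convex.eq_of_norm_sub_eq_infDist (hC : Convex ℝ C) {x p q : H} (hp : p ∈ C) (hq : q ∈ C)
    (hpx : ‖p - x‖ = infDist x C) (hqx : ‖q - x‖ = infDist x C) : p = q := by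
  set m : H := (1 / 2 : ℝ) • p + (1 / 2 : ℝ) • q
  have hm : infDist x C ≤ ‖m - x‖ := by
    rw [← dist_eq_norm, dist_comm]
    exact infDist_le_dist_of_mem (hC hp hq (by norm_num) (by norm_num) (by norm_num))
  have hpar := parallelogram_law_with_norm ℝ (p - x) (q - x)
  rw [show p - x + (q - x) = (2 : ℝ) • (m - x) by simp only [m]; module,
    show p - x - (q - x) = p - q by abel, norm_smul, Real.norm_two] at hpar
  have hpq : ‖p - q‖ = 0 := by
    nlinarith [norm_nonneg (p - q), infDist_nonneg (x := x) (s := C)]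
  rwa [norm_eq_zero, sub_eq_zero] at hpq

theorem inner_sub_half_norm_sq_le_asplundFunction {c : H} (hc : c ∈ C) (z : H) :
    ⟪c, z⟫ - ‖c‖ ^ 2 / 2 ≤ asplundFunction C z := by
  have hdist : infDist z C ^ 2 ≤ ‖z - c‖ ^ 2 := by
    rw [← dist_eq_norm]
    exact pow_le_pow_left₀ infDist_nonneg (infDist_le_dist_of_mem hc) 2
  rw [norm_sub_sq_real, real_inner_comm] at hdist
  rw [asplundFunction]
  linarith

theorem asplundFunction_eq_of_norm_sub_eq_infDist {x p : H} (hpx : ‖p - x‖ = infDist x C) :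
    asplundFunction C x = ⟪p, x⟫ - ‖p‖ ^ 2 / 2 := by
  rw [asplundFunction, ← hpx, norm_sub_sq_real, real_inner_comm]
  ring

theorem asplundFunction_add_inner_le {x p : H} (hp : p ∈ C) (hpx : ‖p - x‖ = infDist x C)
    (z : H) : asplundFunction C x + ⟪p, z - x⟫ ≤ asplundFunction C z := by
  rw [asplundFunction_eq_of_norm_sub_eq_infDist hpx, inner_sub_right]
  linarith [inner_sub_half_norm_sq_le_asplundFunction hp z]

theorem le_asplundFunction_sub_inner_add_smul {a b : H} (ha : a ∈ C) (hb : b ∈ C) {θ μ : ℝ}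
    (hθ : 0 ≤ θ) (hμ : 0 ≤ μ) (hθμ : θ + μ = 1) (z : H) :
    -(θ * ‖a‖ ^ 2 + μ * ‖b‖ ^ 2) / 2 ≤ asplundFunction C z - ⟪θ • a + μ • b, z⟫ := by
  have hza := mul_le_mul_of_nonneg_left (inner_sub_half_norm_sq_le_asplundFunction ha z) hθ
  have hzb := mul_le_mul_of_nonneg_left (inner_sub_half_norm_sq_le_asplundFunction hb z) hμ
  rw [inner_add_left, real_inner_smul_left, real_inner_smul_left]
  linear_combination hza + hzb + asplundFunction C z * hθμ

namespace IsNearestPointMap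

variable {P : H → H}

theorem hasFDerivAt_asplundFunction (hP : IsNearestPointMap C P) {x : H}
    (hPx : ContinuousAt P x) : HasFDerivAt (asplundFunction C) (innerSL ℝ (P x)) x := by
  rw [hasFDerivAt_iff_isLittleO_nhds_zero, isLittleO_iff]
  intro c hc
  have hPx' : Tendsto (fun h => P (x + h)) (𝓝 0) (𝓝 (P x)) := by
    have : Tendsto (fun h : H => x + h) (𝓝 0) (𝓝 x) := by
      simpa using tendsto_const_nhds.add (tendsto_id (x := 𝓝 (0 : H)))
    exact hPx.tendsto.comp this
  filter_upwards [(tendsto_iff_norm_sub_tendsto_zero.1 hPx').eventually (ge_mem_nhds hc)]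
    with h hh
  -- The subgradient inequalities at `x` and at `x + h` trap the remainder
  -- between `0` and `⟪P (x + h) - P x, h⟫`.
  have hlow := asplundFunction_add_inner_le (hP x).1 (hP x).2 (x + h)
  have hup := asplundFunction_add_inner_le (hP (x + h)).1 (hP (x + h)).2 x
  have hcs : ⟪P (x + h) - P x, h⟫ ≤ c * ‖h‖ :=
    (real_inner_le_norm _ _).trans (mul_le_mul_of_nonneg_right hh (norm_nonneg h))
  rw [add_sub_cancel_left] at hlow
  rw [sub_add_cancel_left, inner_neg_right] at hup
  rw [inner_sub_left] at hcs
  rw [innerSL_apply_apply, Real.norm_eq_abs, abs_le]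
  constructor <;> linarith

theorem eq_sub_smul_of_forall_le (hP : IsNearestPointMap C P) {x y : H} {ε : ℝ}
    (hPx : ContinuousAt P x)
    (hmin : ∀ z, asplundFunction C x - ⟪y, x⟫ + ε / 2 * ‖x‖ ^ 2 ≤
      asplundFunction C z - ⟪y, z⟫ + ε / 2 * ‖z‖ ^ 2) :
    P x = y - ε • x := by
  have hderiv : HasFDerivAt (fun z => asplundFunction C z - ⟪y, z⟫ + ε / 2 * ‖z‖ ^ 2)
      (innerSL ℝ (P x) - innerSL ℝ y + (ε / 2) • (2 • innerSL ℝ x)) x :=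
    ((hP.hasFDerivAt_asplundFunction hPx).sub (innerSL ℝ y).hasFDerivAt).add
      ((hasStrictFDerivAt_norm_sq x).hasFDerivAt.const_mul (ε / 2))
  set v := P x - (y - ε • x)
  have hzero := congrArg (fun L => L v)
    (IsLocalMin.hasFDerivAt_eq_zero (Eventually.of_forall hmin) hderiv)
  simp only [add_apply, sub_apply, smul_apply, innerSL_apply_apply, zero_apply,
    nsmul_eq_mul, smul_eq_mul] at hzero
  have hv : ⟪v, v⟫ = 0 :=
    calc ⟪v, v⟫ = ⟪P x - y + ε • x, v⟫ := by congr 1; simp only [v]; abel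
      _ = 0 := by rw [inner_add_left, inner_sub_left, real_inner_smul_left]; linarith
  rwa [inner_self_eq_zero, sub_eq_zero] at hv

theorem mem_closure_of_forall_le [ProperSpace H] (hP : IsNearestPointMap C P)
    (hPc : Continuous P) {y : H} {m : ℝ} (hm : ∀ z, m ≤ asplundFunction C z - ⟪y, z⟫) :
    y ∈ closure C := by
  rw [Metric.mem_closure_iff]
  intro δ hδ
  set K := asplundFunction C 0 - m
  have hK : 0 ≤ K := by simpa [K] using hm 0
  set ε := δ ^ 2 / (2 * K + 1)
  have hε : 0 < ε := by positivity
  set G := fun z => asplundFunction C z - ⟪y, z⟫ + ε / 2 * ‖z‖ ^ 2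
  have hGc : Continuous G := by
    have := continuous_asplundFunction (C := C)
    fun_prop
  have hGcoercive : Tendsto G (cocompact H) atTop := by
    refine tendsto_atTop_mono (fun z => add_le_add_left (hm z) _) ?_
    exact tendsto_atTop_add_const_left _ m <|
      (tendsto_pow_atTop two_ne_zero).const_mul_atTop (half_pos hε) |>.comp
        (tendsto_norm_cocompact_atTop (E := H))
  obtain ⟨x, hx⟩ := hGc.exists_forall_le hGcoercive
  have hPx : P x = y - ε • x := hP.eq_sub_smul_of_forall_le hPc.continuousAt hx
  have hbound : ε * ‖x‖ ^ 2 ≤ 2 * K := by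
    have := hx 0
    simp only [G, inner_zero_right, norm_zero] at this
    linarith [hm x]
  refine ⟨P x, (hP x).1, lt_of_pow_lt_pow_left₀ 2 hδ.le ?_⟩
  rw [hPx, dist_eq_norm, sub_sub_cancel, norm_smul, Real.norm_of_nonneg hε.le]
  calc (ε * ‖x‖) ^ 2 = ε * (ε * ‖x‖ ^ 2) := by ring
    _ ≤ ε * (2 * K) := by gcongr
    _ < δ ^ 2 := by
      rw [div_mul_eq_mul_div, div_lt_iff₀ (by positivity)]
      nlinarith

theorem convex [ProperSpace H] (hC : IsClosed C) (hP : IsNearestPointMap C P)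
    (hPc : Continuous P) : Convex ℝ C := by
  intro a ha b hb θ μ hθ hμ hθμ
  rw [← hC.closure_eq]
  exact hP.mem_closure_of_forall_le hPc (le_asplundFunction_sub_inner_add_smul ha hb hθ hμ hθμ)

end IsNearestPointMap

end InnerProduct

/-- A nonempty closed set `C` in a finite-dimensional real inner product
space is convex if and only if every point `x` has exactly one best approximation in `C`,
i.e. exactly one `p ∈ C` with `‖p - x‖ = inf_{c ∈ C} ‖c - x‖`. -/
theorem stmt16 {H : Type*} [NormedAddCommGroup H] [InnerProductSpace ℝ H]
    [FiniteDimensional ℝ H]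
    (C : Set H) (hCne : C.Nonempty) (hCclosed : IsClosed C) :
    Convex ℝ C ↔ ∀ x : H, ∃! p, p ∈ C ∧ ‖p - x‖ = Metric.infDist x C := by
  refine ⟨fun hconv x => ?_, fun huniq => ?_⟩
  · obtain ⟨p, hpC, hpx⟩ := hCclosed.exists_infDist_eq_dist hCne x
    rw [dist_comm, dist_eq_norm] at hpx
    exact ⟨p, ⟨hpC, hpx.symm⟩, fun q hq => hconv.eq_of_norm_sub_eq_infDist hq.1 hpC hq.2 hpx.symm⟩
  · choose P hP hPuniq using huniq
    have hPc : Continuous P :=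
      IsNearestPointMap.continuous hCclosed hP fun x p hp hpx => hPuniq x p ⟨hp, hpx⟩
    exact IsNearestPointMap.convex hCclosed hP hPc
end
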